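/- Let h : ℝⁿ → ℝ ∪ {∞} be a proper polyhedral convex function, s ∈ dom h with C := ∂h(s) ≠ ∅. Then there exists a neighborhood V of s such that for all x ∈ V, the directional derivative satisfies h'(s; x − s) = σ_C(x − s) and moreover ∂h(x) = ∂σ_C(x − s) = {v ∈ C : ⟨v, x−s⟩ = σ_C(x−s)} whenever x ∈ V ∩ dom h. -/

import Mathlib

open scoped RealInnerProductSpace Topology
open Filter

/-- Convex subdifferential of an extended-real-valued function. -/
noncomputable def ESub {n : ℕ} (g : EuclideanSpace ℝ (Fin n) → EReal)
    (x : EuclideanSpace ℝ (Fin n)) : Set (EuclideanSpace ℝ (Fin n)) :=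
  {v | ∀ z, g x + ((⟪v, z - x⟫ : ℝ) : EReal) ≤ g z}

def EProper {n : ℕ} (g : EuclideanSpace ℝ (Fin n) → EReal) : Prop :=
  (∃ x, g x ≠ ⊤) ∧ ∀ x, g x ≠ ⊥

/-- A function is polyhedral iff its epigraph is an intersection of finitely many
closed halfspaces of `ℝⁿ × ℝ`. -/
def IsPolyhedralFn {n : ℕ} (g : EuclideanSpace ℝ (Fin n) → EReal) : Prop :=
  ∃ (m : ℕ) (a : Fin m → EuclideanSpace ℝ (Fin n)) (r b : Fin m → ℝ),
    {p : EuclideanSpace ℝ (Fin n) × ℝ | g p.1 ≤ (p.2 : EReal)} =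
      {p : EuclideanSpace ℝ (Fin n) × ℝ | ∀ i, ⟪a i, p.1⟫ + r i * p.2 ≤ b i}

/-- Support function of a set, with values in `EReal`. -/
noncomputable def ESupport {n : ℕ} (C : Set (EuclideanSpace ℝ (Fin n)))
    (d : EuclideanSpace ℝ (Fin n)) : EReal :=
  sSup ((fun v => ((⟪v, d⟫ : ℝ) : EReal)) '' C)

/-! Near `(s, h s)` the epigraph of a polyhedral `h` is cut out by the constraints active there,
which are homogeneous in `(x - s, t - h s)`. An active constraint `⟪a, x⟫ + r t ≤ b` with `r < 0`
yields the subgradient `a / (-r)` at `s`, one with `r = 0` a recession direction `a` of `C = ∂h(s)`;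
together they bound `h` from above near `s` by `h s + σ_C(· - s)`, while the subgradient inequality
bounds `h` from below by the same function everywhere. Both conclusions then follow from this local
representation alone: the difference quotient is eventually constant by positive homogeneity of
`σ_C`, and testing a subgradient `v` at `x` against the points `s` and `x + t₀ (x - s)` forces
`⟪v, x - s⟫ = σ_C(x - s)`. -/

open Set

namespace EReal

theorem le_of_forall_coe_ge {a b : EReal} (H : ∀ t : ℝ, b ≤ t → a ≤ t) : a ≤ b := by
  by_contra! hba
  obtain ⟨t, hbt, hta⟩ := EReal.lt_iff_exists_real_btwn.1 hba
  exact (H t hbt.le).not_gt hta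

end EReal

variable {n : ℕ}

section SupportFunction

variable {C : Set (EuclideanSpace ℝ (Fin n))}

theorem le_eSupport {v : EuclideanSpace ℝ (Fin n)} (hv : v ∈ C) (d : EuclideanSpace ℝ (Fin n)) :
    ((⟪v, d⟫ : ℝ) : EReal) ≤ ESupport C d :=
  le_sSup (mem_image_of_mem _ hv)

variable {d : EuclideanSpace ℝ (Fin n)}

theorem eSupport_le_coe_iff {m : ℝ} : ESupport C d ≤ m ↔ ∀ v ∈ C, ⟪v, d⟫ ≤ m := by
  simp [ESupport]

theorem eSupport_eq_of_forall_inner_le {v : EuclideanSpace ℝ (Fin n)} (hv : v ∈ C)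
    (hmax : ∀ u ∈ C, ⟪u, d⟫ ≤ ⟪v, d⟫) : ESupport C d = ⟪v, d⟫ :=
  (eSupport_le_coe_iff.2 hmax).antisymm (le_eSupport hv d)

theorem eSupport_smul_le {t : ℝ} (ht : 0 ≤ t) : ESupport C (t • d) ≤ t * ESupport C d :=
  sSup_le <| forall_mem_image.2 fun v hv => by
    rw [real_inner_smul_right, EReal.coe_mul]
    exact mul_le_mul_of_nonneg_left (le_eSupport hv d) (EReal.coe_nonneg.2 ht)

theorem eSupport_smul {t : ℝ} (ht : 0 < t) : ESupport C (t • d) = t * ESupport C d := by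
  refine (eSupport_smul_le ht.le).antisymm ?_
  calc (t : EReal) * ESupport C d = t * ESupport C (t⁻¹ • t • d) := by
        rw [smul_smul, inv_mul_cancel₀ ht.ne', one_smul]
    _ ≤ t * (t⁻¹ * ESupport C (t • d)) :=
        mul_le_mul_of_nonneg_left (eSupport_smul_le (inv_nonneg.2 ht.le)) (EReal.coe_nonneg.2 ht.le)
    _ = ESupport C (t • d) := by
        rw [← mul_assoc, ← EReal.coe_mul, mul_inv_cancel₀ ht.ne', EReal.coe_one, one_mul]

theorem eSupport_eq_top_of_add_smul_mem {v w : EuclideanSpace ℝ (Fin n)}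
    (hw : ∀ μ : ℝ, 0 ≤ μ → v + μ • w ∈ C) (hd : 0 < ⟪w, d⟫) : ESupport C d = ⊤ := by
  refine (EReal.eq_top_iff_forall_lt _).2 fun y => ?_
  set μ := (|y - ⟪v, d⟫| + 1) / ⟪w, d⟫
  have hμ : 0 ≤ μ := by positivity
  have hinner : ⟪v + μ • w, d⟫ = ⟪v, d⟫ + (|y - ⟪v, d⟫| + 1) := by
    rw [inner_add_left, real_inner_smul_left, div_mul_cancel₀ _ hd.ne']
  refine lt_of_lt_of_le (EReal.coe_lt_coe_iff.2 ?_) (le_eSupport (hw μ hμ) d)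
  rw [hinner]
  linarith [le_abs_self (y - ⟪v, d⟫)]

end SupportFunction

section Subdifferential

variable {g : EuclideanSpace ℝ (Fin n) → EReal} {s : EuclideanSpace ℝ (Fin n)} {η : ℝ}

theorem mem_eSub_iff_of_eq_coe (hs : g s = η) {v : EuclideanSpace ℝ (Fin n)} :
    v ∈ ESub g s ↔ ∀ z (t : ℝ), g z ≤ t → η + ⟪v, z - s⟫ ≤ t := by
  simp only [ESub, mem_ofPred_eq, hs]
  refine forall_congr' fun z => ⟨fun hz t ht => ?_, fun hz => ?_⟩
  · exact EReal.coe_le_coe_iff.1 (by simpa using hz.trans ht)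
  · exact EReal.le_of_forall_coe_ge fun t ht => by exact_mod_cast hz t ht

theorem coe_add_eSupport_eSub_le (hs : g s = η) (x : EuclideanSpace ℝ (Fin n)) :
    g s + ESupport (ESub g s) (x - s) ≤ g x := by
  refine EReal.le_of_forall_coe_ge fun t ht => ?_
  have hsupp : ESupport (ESub g s) (x - s) ≤ (t - η : ℝ) := eSupport_le_coe_iff.2 fun v hv => by
    linarith [(mem_eSub_iff_of_eq_coe hs).1 hv x t ht]
  calc g s + ESupport (ESub g s) (x - s) ≤ η + (t - η : ℝ) := by
        rw [hs]; gcongr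
    _ = t := by rw [← EReal.coe_add, add_sub_cancel]

theorem inv_smul_mem_eSub {w : EuclideanSpace ℝ (Fin n)} {ρ : ℝ} (hs : g s = η) (hρ : 0 < ρ)
    (hw : ∀ z (t : ℝ), g z ≤ t → ⟪w, z - s⟫ ≤ ρ * (t - η)) : ρ⁻¹ • w ∈ ESub g s := by
  refine (mem_eSub_iff_of_eq_coe hs).2 fun z t hz => ?_
  rw [real_inner_smul_left, ← le_sub_iff_add_le', inv_mul_le_iff₀ hρ]
  exact hw z t hz

theorem add_smul_mem_eSub {v w : EuclideanSpace ℝ (Fin n)} {μ : ℝ} (hs : g s = η)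
    (hw : ∀ z (t : ℝ), g z ≤ t → ⟪w, z - s⟫ ≤ 0) (hv : v ∈ ESub g s) (hμ : 0 ≤ μ) :
    v + μ • w ∈ ESub g s := by
  refine (mem_eSub_iff_of_eq_coe hs).2 fun z t hz => ?_
  rw [inner_add_left, real_inner_smul_left]
  linarith [(mem_eSub_iff_of_eq_coe hs).1 hv z t hz, mul_nonpos_of_nonneg_of_nonpos hμ (hw z t hz)]

end Subdifferential

theorem nonpos_of_forall_ge_add_mul_le {p q b η : ℝ} (h : ∀ t, η ≤ t → p + q * t ≤ b) :
    q ≤ 0 := by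
  by_contra! hq
  have ht := h (max η ((b - p + 1) / q)) (le_max_left _ _)
  have hqt : b - p + 1 ≤ q * max η ((b - p + 1) / q) := (div_le_iff₀' hq).1 (le_max_right _ _)
  linarith

section Polyhedral

variable {g : EuclideanSpace ℝ (Fin n) → EReal} {s : EuclideanSpace ℝ (Fin n)} {η : ℝ}

theorem inner_le_neg_mul_of_eSupport_eq_coe {a c d : EuclideanSpace ℝ (Fin n)} {r m : ℝ}
    (hs : g s = η) (hr : r ≤ 0) (hc : c ∈ ESub g s)
    (ha : ∀ z (t : ℝ), g z ≤ t → ⟪a, z - s⟫ ≤ -r * (t - η)) (hm : ESupport (ESub g s) d = m) :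
    ⟪a, d⟫ ≤ -r * m := by
  rcases hr.lt_or_eq with hneg | hzero
  · have := eSupport_le_coe_iff.1 hm.le _ (inv_smul_mem_eSub hs (neg_pos.2 hneg) ha)
    rwa [real_inner_smul_left, inv_mul_le_iff₀ (neg_pos.2 hneg)] at this
  · rw [hzero, neg_zero, zero_mul]
    by_contra! hpos
    have hrec : ∀ z (t : ℝ), g z ≤ t → ⟪a, z - s⟫ ≤ 0 := fun z t hz => by
      simpa [hzero] using ha z t hz
    have := eSupport_eq_top_of_add_smul_mem (fun μ hμ => add_smul_mem_eSub hs hrec hc hμ) hpos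
    exact EReal.coe_ne_top m (hm ▸ this)

theorem eventually_eq_add_eSupport_of_epigraph {ι : Type*} [Finite ι]
    (a : ι → EuclideanSpace ℝ (Fin n)) (r b : ι → ℝ)
    (hrow : ∀ x (t : ℝ), g x ≤ t ↔ ∀ i, ⟪a i, x⟫ + r i * t ≤ b i) (hs : g s = η)
    (hC : (ESub g s).Nonempty) :
    ∀ᶠ x in 𝓝 s, g x = g s + ESupport (ESub g s) (x - s) := by
  obtain ⟨c, hc⟩ := hC
  have hrow_s : ∀ i, ⟪a i, s⟫ + r i * η ≤ b i := (hrow s η).1 hs.le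
  have hr : ∀ i, r i ≤ 0 := fun i => nonpos_of_forall_ge_add_mul_le fun t ht =>
    (hrow s t).1 (hs.trans_le (EReal.coe_le_coe_iff.2 ht)) i
  have hactive : ∀ i, ⟪a i, s⟫ + r i * η = b i →
      ∀ z (t : ℝ), g z ≤ t → ⟪a i, z - s⟫ ≤ -r i * (t - η) := fun i hi z t hz => by
    rw [inner_sub_right]; linarith [(hrow z t).1 hz i]
  -- Inactive constraints stay strict at height `η + ⟪c, x - s⟫` near `s`, hence (as `r i ≤ 0`)
  -- at every height above it, in particular at `η + σ_C(x - s)`.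
  have hnear : ∀ᶠ x in 𝓝 s, ∀ i, ⟪a i, s⟫ + r i * η < b i →
      ⟪a i, x⟫ + r i * (η + ⟪c, x - s⟫) < b i := by
    refine eventually_all.2 fun i => eventually_imp_distrib_left.2 fun hi => ?_
    have hcont : Continuous fun x => ⟪a i, x⟫ + r i * (η + ⟪c, x - s⟫) := by fun_prop
    exact (hcont.tendsto s).eventually_lt_const (by simpa using hi)
  filter_upwards [hnear] with x hx
  refine le_antisymm ?_ (coe_add_eSupport_eSub_le hs x)
  by_cases htop : ESupport (ESub g s) (x - s) = ⊤
  · rw [htop, hs, EReal.coe_add_top]; exact le_top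
  have hbot := ne_bot_of_le_ne_bot (EReal.coe_ne_bot _) (le_eSupport hc (x - s))
  obtain ⟨m, hm⟩ : ∃ m : ℝ, ESupport (ESub g s) (x - s) = m :=
    ⟨_, (EReal.coe_toReal htop hbot).symm⟩
  have hcm : ⟪c, x - s⟫ ≤ m := eSupport_le_coe_iff.1 hm.le c hc
  rw [hm, hs, ← EReal.coe_add, hrow]
  intro i
  rcases (hrow_s i).lt_or_eq with hlt | heq
  · linarith [hx i hlt, mul_le_mul_of_nonpos_left hcm (hr i)]
  have hstep := inner_le_neg_mul_of_eSupport_eq_coe hs (hr i) hc (hactive i heq) hm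
  rw [inner_sub_right] at hstep
  linarith

theorem IsPolyhedralFn.eventually_eq_add_eSupport (hpoly : IsPolyhedralFn g) (hs : g s = η)
    (hC : (ESub g s).Nonempty) :
    ∀ᶠ x in 𝓝 s, g x = g s + ESupport (ESub g s) (x - s) := by
  obtain ⟨m, a, r, b, hepi⟩ := hpoly
  exact eventually_eq_add_eSupport_of_epigraph a r b
    (fun x t => by simpa using Set.ext_iff.1 hepi (x, t)) hs hC

end Polyhedral

section LocalRepresentation

variable {g : EuclideanSpace ℝ (Fin n) → EReal} {s : EuclideanSpace ℝ (Fin n)} {η : ℝ}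

theorem tendsto_add_smul_nhdsGT_zero (x d : EuclideanSpace ℝ (Fin n)) :
    Tendsto (fun t : ℝ => x + t • d) (𝓝[>] 0) (𝓝 x) := by
  have hcont : Continuous fun t : ℝ => x + t • d := by fun_prop
  simpa using (hcont.tendsto 0).mono_left nhdsWithin_le_nhds

theorem tendsto_slope_of_eventually_eq_add_eSupport {C : Set (EuclideanSpace ℝ (Fin n))}
    (hs : g s = η) (hrep : ∀ᶠ y in 𝓝 s, g y = g s + ESupport C (y - s))
    (d : EuclideanSpace ℝ (Fin n)) :
    Tendsto (fun t : ℝ => (g (s + t • d) - g s) * ((t⁻¹ : ℝ) : EReal)) (𝓝[>] 0)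
      (𝓝 (ESupport C d)) := by
  refine tendsto_const_nhds.congr' ?_
  filter_upwards [(tendsto_add_smul_nhdsGT_zero s d).eventually hrep, self_mem_nhdsWithin]
    with t ht (htpos : 0 < t)
  rw [ht, add_sub_cancel_left, eSupport_smul htpos, hs, EReal.add_sub_cancel_left, mul_comm,
    ← mul_assoc, ← EReal.coe_mul, inv_mul_cancel₀ htpos.ne', EReal.coe_one, one_mul]

theorem eSub_eq_of_eventually_eq_add_eSupport (hs : g s = η) {x : EuclideanSpace ℝ (Fin n)}
    (hrep : ∀ᶠ y in 𝓝 x, g y = g s + ESupport (ESub g s) (y - s)) (htop : g x ≠ ⊤)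
    (hbot : g x ≠ ⊥) :
    ESub g x = {v | v ∈ ESub g s ∧ ∀ u ∈ ESub g s, ⟪u, x - s⟫ ≤ ⟪v, x - s⟫} := by
  have hx : g x = η + ESupport (ESub g s) (x - s) := hs ▸ hrep.self_of_nhds
  have hσtop : ESupport (ESub g s) (x - s) ≠ ⊤ := fun h => htop (by rw [hx, h, EReal.coe_add_top])
  have hσbot : ESupport (ESub g s) (x - s) ≠ ⊥ := fun h => hbot (by rw [hx, h, EReal.add_bot])
  obtain ⟨m, hm⟩ : ∃ m : ℝ, ESupport (ESub g s) (x - s) = m :=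
    ⟨_, (EReal.coe_toReal hσtop hσbot).symm⟩
  have hgx : g x = ((η + m : ℝ) : EReal) := by rw [hx, hm, EReal.coe_add]
  obtain ⟨t₀, hz, ht₀ : 0 < t₀⟩ := ((tendsto_add_smul_nhdsGT_zero x (x - s)).eventually hrep).and
    self_mem_nhdsWithin |>.exists
  have hgz : g (x + t₀ • (x - s)) = ((η + (1 + t₀) * m : ℝ) : EReal) := by
    rw [hz, show x + t₀ • (x - s) - s = (1 + t₀) • (x - s) by module,
      eSupport_smul (by linarith), hm, hs, ← EReal.coe_mul, ← EReal.coe_add]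
  ext v
  simp only [mem_ofPred_eq]
  constructor
  · intro hv
    have hvs := (mem_eSub_iff_of_eq_coe hgx).1 hv s η hs.le
    have hvz := (mem_eSub_iff_of_eq_coe hgx).1 hv _ _ hgz.le
    rw [← neg_sub, inner_neg_right] at hvs
    rw [add_sub_cancel_left, real_inner_smul_right] at hvz
    have hvm : ⟪v, x - s⟫ = m :=
      le_antisymm (le_of_mul_le_mul_left (by linarith) ht₀) (by linarith)
    refine ⟨(mem_eSub_iff_of_eq_coe hs).2 fun z t hz => ?_, fun u hu => ?_⟩
    · have := (mem_eSub_iff_of_eq_coe hgx).1 hv z t hz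
      rw [inner_sub_right] at this hvm ⊢
      linarith
    · exact hvm ▸ eSupport_le_coe_iff.1 hm.le u hu
  · rintro ⟨hvs, hvmax⟩
    have hvm : ⟪v, x - s⟫ = m :=
      EReal.coe_injective ((eSupport_eq_of_forall_inner_le hvs hvmax).symm.trans hm)
    refine (mem_eSub_iff_of_eq_coe hgx).2 fun z t hz => ?_
    have := (mem_eSub_iff_of_eq_coe hs).1 hvs z t hz
    rw [inner_sub_right] at this hvm ⊢
    linarith

end LocalRepresentation

/-- local representation of a proper polyhedral function: near `s ∈ dom h`,
the directional derivative `h'(s; x − s)` equals `σ_C(x − s)` where `C = ∂h(s)`, and for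
`x ∈ V ∩ dom h` the subdifferential `∂h(x)` is the argmax set `∂σ_C(x−s)`. -/
theorem stmt11 {n : ℕ} (h : EuclideanSpace ℝ (Fin n) → EReal)
    (hproper : EProper h) (hpoly : IsPolyhedralFn h)
    (s : EuclideanSpace ℝ (Fin n)) (hs : h s ≠ ⊤)
    (C : Set (EuclideanSpace ℝ (Fin n))) (hC : C = ESub h s) (hCne : C.Nonempty) :
    ∃ V ∈ 𝓝 s,
      (∀ x ∈ V,
        Tendsto (fun t : ℝ => (h (s + t • (x - s)) - h s) * ((t⁻¹ : ℝ) : EReal))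
          (𝓝[>] (0 : ℝ)) (𝓝 (ESupport C (x - s)))) ∧
      (∀ x ∈ V, h x ≠ ⊤ →
        ESub h x = {v | v ∈ C ∧ ∀ u ∈ C, ⟪u, x - s⟫ ≤ ⟪v, x - s⟫}) := by
  obtain ⟨η, hη⟩ : ∃ η : ℝ, h s = η := ⟨_, (EReal.coe_toReal hs (hproper.2 s)).symm⟩
  subst hC
  have hrep := hpoly.eventually_eq_add_eSupport hη hCne
  refine ⟨interior {x | h x = h s + ESupport (ESub h s) (x - s)}, interior_mem_nhds.2 hrep,
    fun x _ => tendsto_slope_of_eventually_eq_add_eSupport hη hrep (x - s),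
    fun x hx htop => ?_⟩
  exact eSub_eq_of_eventually_eq_add_eSupport hη (mem_interior_iff_mem_nhds.1 hx) htop
    (hproper.2 x)
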